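/- Let n ≥ 3 and let p₁,…,p_n be integers. Write σ_i = σ_i(p₁,…,p_{i+1}) for 0 ≤ i ≤ n−1. Let M be the (n−1)×(n−1) symmetric tridiagonal integer matrix with diagonal entries M[i,i] = p_i + p_{i+1} and off-diagonal entries M[i,i+1] = M[i+1,i] = −p_{i+1}, and let P be the (n−1)×(n−1) upper-triangular integer matrix with entries P[k,i] = σ_{k−1}(p₁,…,p_k) · ∏_{j=k+1}^{i} p_j for k ≤ i (the empty product for k = i being 1, so the diagonal entries are σ₀(p₁), σ₁(p₁,p₂), …, σ_{n−2}(p₁,…,p_{n−1})) and P[k,i] = 0 for k > i. Then Pᵀ M P equals the diagonal matrix Diag(σ₀·σ₁, σ₁·σ₂, …, σ_{n−2}·σ_{n−1}). -/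

import Mathlib

open Matrix

/-- `esym p a b j` is the `j`-th elementary symmetric polynomial of the values
`p a, p (a+1), …, p (b-1)`; in the 1-indexed notation of the paper, where `p i`
denotes `p_{i+1}`, this is `σ_j(p_{a+1},…,p_b)`. -/
def esym (p : ℕ → ℤ) (a b j : ℕ) : ℤ :=
  ∑ s ∈ (Finset.Ico a b).powersetCard j, ∏ i ∈ s, p i

/-- The `m × m` symmetric tridiagonal matrix with 1-indexed entries
`M[i,i] = p_i + p_{i+1}`, `M[i,i+1] = M[i+1,i] = -p_{i+1}`. -/
def triM (p : ℕ → ℤ) (m : ℕ) : Matrix (Fin m) (Fin m) ℤ :=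
  Matrix.of fun t u =>
    if (t : ℕ) = (u : ℕ) then p t + p ((t : ℕ) + 1)
    else if (t : ℕ) + 1 = (u : ℕ) then -p u
    else if (u : ℕ) + 1 = (t : ℕ) then -p t
    else 0

/-- The upper triangular matrix with 1-indexed entries
`P[k,i] = σ_{k−1}(p₁,…,p_k) · ∏_{j=k+1}^{i} p_j` for `k ≤ i` and `0` below the
diagonal.  In 0-indexed terms the `(t,u)` entry for `t ≤ u` is
`esym p 0 (t+1) t * ∏_{j ∈ [t+1, u]} p j`. -/
def gsP (n : ℕ) (p : ℕ → ℤ) : Matrix (Fin (n - 1)) (Fin (n - 1)) ℤ :=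
  Matrix.of fun t u =>
    if (t : ℕ) ≤ (u : ℕ) then
      esym p 0 ((t : ℕ) + 1) (t : ℕ) * ∏ j ∈ Finset.Ico ((t : ℕ) + 1) ((u : ℕ) + 1), p j
    else 0

lemma esym_zero (p : ℕ → ℤ) (a b : ℕ) : esym p a b 0 = 1 := by simp [esym]

lemma esym_succ (p : ℕ → ℤ) (t : ℕ) :
    esym p 0 (t+2) (t+1) = p (t+1) * esym p 0 (t+1) t + ∏ j ∈ Finset.range (t+1), p j := by
  unfold esym
  have key : Finset.Ico 0 (t+2) = insert (t+1) (Finset.Ico 0 (t+1)) := by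
    rw [← Finset.range_eq_Ico, ← Finset.range_eq_Ico]; exact Finset.range_add_one
  rw [key, Finset.powersetCard_succ_insert (by simp)]
  rw [Finset.sum_union]
  · rw [Finset.sum_image, Finset.mul_sum]
    · have h1 : (Finset.Ico 0 (t+1)).powersetCard (t+1) = {Finset.Ico 0 (t+1)} := by
        have h2 := Finset.powersetCard_self (Finset.range (t+1))
        rw [← Finset.range_eq_Ico]
        rwa [Finset.card_range] at h2
      simp only [Nat.succ_eq_add_one, h1]
      simp only [Finset.sum_singleton]
      rw [add_comm]
      congr 1
      · apply Finset.sum_congr rfl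
        intro s hs
        rw [Finset.prod_insert]
        intro hmem
        have := Finset.mem_powersetCard.1 hs
        exact absurd (this.1 hmem) (by simp)
      · apply Finset.prod_congr _ (fun _ _ => rfl)
        exact (Finset.range_eq_Ico (a := t+1)).symm
    · intro s hs r hr hsr
      have hs' := Finset.mem_powersetCard.1 hs
      have hr' := Finset.mem_powersetCard.1 hr
      have h1 : t+1 ∉ s := fun h => absurd (hs'.1 h) (by simp)
      have h2 : t+1 ∉ r := fun h => absurd (hr'.1 h) (by simp)
      rw [← Finset.erase_insert h1, ← Finset.erase_insert h2, hsr]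
  · rw [Finset.disjoint_right]
    intro s hs hs2
    obtain ⟨r, hr, rfl⟩ := Finset.mem_image.1 hs
    have hmem := (Finset.mem_powersetCard.1 hs2).1 (Finset.mem_insert_self _ _)
    exact absurd hmem (by simp)

def Pf (p : ℕ → ℤ) (t u : ℕ) : ℤ :=
  if t ≤ u then esym p 0 (t+1) t * ∏ j ∈ Finset.Ico (t+1) (u+1), p j else 0

def Mf (p : ℕ → ℤ) (t u : ℕ) : ℤ :=
  if t = u then p t + p (t+1) else if t+1 = u then -p u else if u+1 = t then -p t else 0

lemma sum_delta (m c : ℕ) (v : ℕ → ℤ) (hc : c < m) :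
    (∑ k ∈ Finset.range m, if k = c then v k else 0) = v c := by
  rw [Finset.sum_ite_eq']
  simp [hc]

lemma Pf_lower (p : ℕ → ℤ) {t u : ℕ} (h : u < t) : Pf p t u = 0 := by
  simp [Pf, Nat.not_le.2 h]



lemma mp_entry' (p : ℕ → ℤ) (m t u : ℕ) (ht : t < m) (hu : u < m) :
    ∑ k ∈ Finset.range m, Mf p t k * Pf p k u
      = if t = u then esym p 0 (u+2) (u+1)
        else if t = u+1 then -p (u+1) * esym p 0 (u+1) u else 0 := by
  cases t with
  | zero =>
    have hd : ∀ k ∈ Finset.range m, Mf p 0 k * Pf p k u =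
        (if k = 0 then (p 0 + p 1) * Pf p 0 u else 0)
        + (if k = 1 then -p 1 * Pf p 1 u else 0) := by
      intro k _
      simp only [Mf]
      split_ifs <;> first | (exact (‹False›).elim) | (exfalso; omega) | (subst_vars ; ring)
    rw [Finset.sum_congr rfl hd, Finset.sum_add_distrib,
      sum_delta m 0 _ (by omega)]
    have h2 : (∑ k ∈ Finset.range m, if k = 1 then -p 1 * Pf p 1 u else 0)
        = -p 1 * Pf p 1 u := by
      rcases Nat.lt_or_ge 1 m with h | h
      · exact sum_delta m 1 _ h
      · rw [@Pf_lower p 1 u (by omega)]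
        rw [Finset.sum_eq_zero (fun k hk => by
          rw [if_neg]; have := Finset.mem_range.1 hk; omega)]
        ring
    rw [h2]
    cases u with
    | zero =>
      rw [if_pos rfl, @Pf_lower p 1 0 (by omega), esym_succ, esym_zero]
      simp [Pf, esym_zero]
      ring
    | succ u' =>
      rw [if_neg (by omega), if_neg (by omega)]
      simp only [Pf, if_pos (show 0 ≤ u'+1 by omega), if_pos (show 1 ≤ u'+1 by omega),
        esym_zero]
      rw [Finset.prod_eq_prod_Ico_succ_bot (by omega : 1 < u'+1+1) p, esym_succ, esym_zero]
      simp
      ring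
  | succ t' =>
    have hd : ∀ k ∈ Finset.range m, Mf p (t'+1) k * Pf p k u =
        (if k = t'+1 then (p (t'+1) + p (t'+2)) * Pf p (t'+1) u else 0)
        + (if k = t'+2 then -p (t'+2) * Pf p (t'+2) u else 0)
        + (if k = t' then -p (t'+1) * Pf p t' u else 0) := by
      intro k _
      simp only [Mf]
      split_ifs <;> first | (exact (‹False›).elim) | (exfalso; omega) | (subst_vars ; ring)
    rw [Finset.sum_congr rfl hd, Finset.sum_add_distrib, Finset.sum_add_distrib,
      sum_delta m (t'+1) _ ht, sum_delta m t' _ (by omega)]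
    have h2 : (∑ k ∈ Finset.range m, if k = t'+2 then -p (t'+2) * Pf p (t'+2) u else 0)
        = -p (t'+2) * Pf p (t'+2) u := by
      rcases Nat.lt_or_ge (t'+2) m with h | h
      · exact sum_delta m (t'+2) _ h
      · rw [@Pf_lower p (t'+2) u (by omega)]
        rw [Finset.sum_eq_zero (fun k hk => by
          rw [if_neg]; have := Finset.mem_range.1 hk; omega)]
        ring
    rw [h2]
    rcases lt_trichotomy u t' with hlt | heq | hgt
    · rw [@Pf_lower p (t'+1) u (by omega), @Pf_lower p (t'+2) u (by omega),
        @Pf_lower p t' u (by omega), if_neg (by omega), if_neg (by omega)]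
      ring
    · subst heq
      rw [@Pf_lower p (u+1) u (by omega), @Pf_lower p (u+2) u (by omega),
        if_neg (by omega), if_pos rfl]
      simp only [Pf, le_refl, if_pos, Finset.Ico_self, Finset.prod_empty]
      ring
    · rcases Nat.eq_or_lt_of_le (show t'+1 ≤ u by omega) with heq | hgt2
    -- t = u : diagonal
      · subst heq
        rw [@Pf_lower p (t'+2) (t'+1) (by omega), if_pos rfl]
        simp only [Pf, if_pos (show t'+1 ≤ t'+1 from le_refl _), if_pos (show t' ≤ t'+1 by omega),
          Finset.Ico_self, Finset.prod_empty, mul_one]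
        rw [show Finset.Ico (t'+1) (t'+1+1) = {t'+1} by ext x; simp,
          Finset.prod_singleton]
        rw [esym_succ p (t'+1), esym_succ p t',
          show t'+1+1 = (t'+1)+1 from rfl, Finset.prod_range_succ p (t'+1), Finset.prod_range_succ p t']
        ring
      · -- t < u
        rw [if_neg (by omega), if_neg (by omega)]
        simp only [Pf, if_pos (show t'+1 ≤ u by omega), if_pos (show t'+2 ≤ u by omega),
          if_pos (show t' ≤ u by omega)]
        rw [Finset.prod_eq_prod_Ico_succ_bot (show t'+1 < u+1 by omega) p,
          Finset.prod_eq_prod_Ico_succ_bot (show t'+1+1 < u+1 by omega) p]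
        rw [esym_succ p (t'+1), esym_succ p t',
          show t'+1+1 = (t'+1)+1 from rfl, Finset.prod_range_succ p (t'+1), Finset.prod_range_succ p t']
        ring

lemma final_entry (p : ℕ → ℤ) (m s u : ℕ) (hs : s < m) (hu : u < m) :
    ∑ k ∈ Finset.range m, Pf p k s *
        (if k = u then esym p 0 (u+2) (u+1)
          else if k = u+1 then -p (u+1) * esym p 0 (u+1) u else 0)
      = if s = u then esym p 0 (u+1) u * esym p 0 (u+2) (u+1) else 0 := by
  have hd : ∀ k ∈ Finset.range m, Pf p k s *
        (if k = u then esym p 0 (u+2) (u+1)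
          else if k = u+1 then -p (u+1) * esym p 0 (u+1) u else 0)
      = (if k = u then Pf p u s * esym p 0 (u+2) (u+1) else 0)
        + (if k = u+1 then Pf p (u+1) s * (-p (u+1) * esym p 0 (u+1) u) else 0) := by
    intro k _
    split_ifs <;> first | (exact (‹False›).elim) | (exfalso; omega) | (subst_vars ; ring)
  rw [Finset.sum_congr rfl hd, Finset.sum_add_distrib, sum_delta m u _ hu]
  have h2 : (∑ k ∈ Finset.range m,
        if k = u+1 then Pf p (u+1) s * (-p (u+1) * esym p 0 (u+1) u) else 0)
      = Pf p (u+1) s * (-p (u+1) * esym p 0 (u+1) u) := by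
    rcases Nat.lt_or_ge (u+1) m with h | h
    · exact sum_delta m (u+1) _ h
    · rw [@Pf_lower p (u+1) s (by omega)]
      rw [Finset.sum_eq_zero (fun k hk => by
        rw [if_neg]; have := Finset.mem_range.1 hk; omega)]
      ring
  rw [h2]
  rcases lt_trichotomy s u with hlt | heq | hgt
  · rw [@Pf_lower p u s (by omega), @Pf_lower p (u+1) s (by omega), if_neg (by omega)]
    ring
  · subst heq
    rw [@Pf_lower p (s+1) s (by omega), if_pos rfl]
    simp only [Pf, le_refl, if_pos, Finset.Ico_self, Finset.prod_empty, mul_one]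
    ring
  · rw [if_neg (by omega)]
    simp only [Pf, if_pos (show u ≤ s by omega), if_pos (show u+1 ≤ s by omega)]
    rw [Finset.prod_eq_prod_Ico_succ_bot (show u+1 < s+1 by omega) p]
    ring

/-- `Pᵀ M P = Diag(σ₀·σ₁, σ₁·σ₂, …, σ_{n−2}·σ_{n−1})` where
`σ_i = σ_i(p₁,…,p_{i+1})`. -/
theorem stmt3 (n : ℕ) (hn : 3 ≤ n) (p : ℕ → ℤ) :
    (gsP n p)ᵀ * triM p (n - 1) * gsP n p =
      Matrix.diagonal (fun t : Fin (n - 1) =>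
        esym p 0 ((t : ℕ) + 1) (t : ℕ) * esym p 0 ((t : ℕ) + 2) ((t : ℕ) + 1)) := by
  ext t u
  rw [Matrix.mul_assoc, Matrix.mul_apply]
  have key : ∀ s : Fin (n-1), (triM p (n-1) * gsP n p) s u
      = if (s:ℕ) = (u:ℕ) then esym p 0 ((u:ℕ)+2) ((u:ℕ)+1)
        else if (s:ℕ) = (u:ℕ)+1 then -p ((u:ℕ)+1) * esym p 0 ((u:ℕ)+1) (u:ℕ) else 0 := by
    intro s
    rw [Matrix.mul_apply]
    show (∑ j : Fin (n-1), Mf p (s:ℕ) (j:ℕ) * Pf p (j:ℕ) (u:ℕ)) = _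
    rw [Fin.sum_univ_eq_sum_range (fun j => Mf p (s:ℕ) j * Pf p j (u:ℕ)) (n-1)]
    exact mp_entry' p (n-1) s u s.isLt u.isLt
  rw [Finset.sum_congr rfl (fun s (_ : s ∈ Finset.univ) => by rw [key s])]
  show (∑ s : Fin (n-1), Pf p (s:ℕ) (t:ℕ) *
      (if (s:ℕ) = (u:ℕ) then esym p 0 ((u:ℕ)+2) ((u:ℕ)+1)
        else if (s:ℕ) = (u:ℕ)+1 then -p ((u:ℕ)+1) * esym p 0 ((u:ℕ)+1) (u:ℕ) else 0)) = _
  rw [Fin.sum_univ_eq_sum_range (fun s => Pf p s (t:ℕ) *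
      (if s = (u:ℕ) then esym p 0 ((u:ℕ)+2) ((u:ℕ)+1)
        else if s = (u:ℕ)+1 then -p ((u:ℕ)+1) * esym p 0 ((u:ℕ)+1) (u:ℕ) else 0)) (n-1)]
  rw [final_entry p (n-1) (t:ℕ) (u:ℕ) t.isLt u.isLt]
  by_cases h : t = u
  · subst h
    simp [Matrix.diagonal_apply_eq]
  · rw [Matrix.diagonal_apply_ne _ h, if_neg (fun hc => h (Fin.ext hc))]
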